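/- The two finite-sum expressions for the even-order integral agree: for every n ≥ 1 and θ in (0, π), ((2n-2)!!/(2n-1)!!) cos(θ) Σ_{k=1}^{n} ((2k-3)!!/(2k-2)!!) / sin^{2k-1}(θ) = (n-1)! Σ_{k=1}^{n} cot^{2k-1}(θ) / ((2k-1)·(k-1)!·(n-k)!). -/

import Mathlib

/-!
With `t = cot θ` we have `1 / sin² θ = 1 + t²`, so after dividing by `t` both sides are
polynomials in `x = t²`, indexed by `m = n - 1`. The right-hand side is
`I_m = ∑ C(m, j) x^j / (2j + 1) = ∫₀¹ (1 + x s²)^m ds`, and integration by parts gives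
`(2m + 3) I_{m+1} = (2m + 2) I_m + (1 + x)^{m+1}`. The left-hand side satisfies the same
recurrence, because `(2m+2)‼ / (2m+3)‼ · (2m+1)‼ / (2m+2)‼ = 1 / (2m+3)`, and both sides
equal `1` at `m = 0`.
-/

open Real Nat Finset

lemma sum_Icc_one_eq_sum_range {M : Type*} [AddCommMonoid M] (f : ℕ → M) (m : ℕ) :
    ∑ k ∈ Icc 1 (m + 1), f k = ∑ j ∈ range (m + 1), f (j + 1) := by
  rw [← Ico_add_one_right_eq_Icc, range_eq_Ico, sum_Ico_add']

section
variable {K : Type*} [Field K] [CharZero K]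

def chooseOddSum (m : ℕ) (x : K) : K :=
  ∑ j ∈ range (m + 1), (m.choose j : K) * x ^ j / (2 * j + 1)

def wallisSum (m : ℕ) (x : K) : K :=
  ((2 * m)‼ : K) / (2 * m + 1)‼ *
    ∑ j ∈ range (m + 1), ((2 * j - 1)‼ : K) / (2 * j)‼ * (1 + x) ^ j

lemma chooseOddSum_succ (m : ℕ) (x : K) :
    (2 * m + 3) * chooseOddSum (m + 1) x = (2 * m + 2) * chooseOddSum m x + (1 + x) ^ (m + 1) := by
  have hterm (j : ℕ) : (2 * m + 3) * ((m + 1).choose j * x ^ j / (2 * j + 1) : K) =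
      (2 * m + 2) * (m.choose j * x ^ j / (2 * j + 1)) + (m + 1).choose j * x ^ j := by
    have hchoose : ((m + 1).choose j * (m + 1 - j : ℕ) : K) = m.choose j * (m + 1) := by
      exact_mod_cast (choose_mul_succ_eq m j).symm
    have hodd : (2 * j + 1 : K) ≠ 0 := by exact_mod_cast (by omega : 2 * j + 1 ≠ 0)
    rcases le_or_gt j (m + 1) with hj | hj
    · rw [Nat.cast_sub hj] at hchoose
      push_cast at hchoose
      field_simp
      linear_combination 2 * x ^ j * hchoose
    · simp [choose_eq_zero_of_lt hj, choose_eq_zero_of_lt (by omega : m < j)]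
  rw [chooseOddSum, chooseOddSum, mul_sum, sum_congr rfl fun j _ => hterm j, sum_add_distrib,
    ← mul_sum, add_comm 1 x, add_pow, sum_range_succ _ (m + 1), choose_succ_self, Nat.cast_zero,
    zero_mul, zero_div, add_zero]
  simp only [one_pow, mul_one, mul_comm]

lemma wallisSum_succ (m : ℕ) (x : K) :
    (2 * m + 3) * wallisSum (m + 1) x = (2 * m + 2) * wallisSum m x + (1 + x) ^ (m + 1) := by
  have hnum : ((2 * (m + 1))‼ : K) = (2 * m + 2) * (2 * m)‼ := by
    rw [show 2 * (m + 1) = 2 * m + 2 by ring, doubleFactorial_add_two]; push_cast; ring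
  have hden : ((2 * (m + 1) + 1)‼ : K) = (2 * m + 3) * (2 * m + 1)‼ := by
    rw [show 2 * (m + 1) + 1 = 2 * m + 1 + 2 by ring, doubleFactorial_add_two]; push_cast; ring
  have hodd : 2 * (m + 1) - 1 = 2 * m + 1 := by omega
  have h1 : ((2 * m)‼ : K) ≠ 0 := by exact_mod_cast (doubleFactorial_pos _).ne'
  have h2 : ((2 * m + 1)‼ : K) ≠ 0 := by exact_mod_cast (doubleFactorial_pos _).ne'
  have h3 : (2 * m + 3 : K) ≠ 0 := by exact_mod_cast (by omega : 2 * m + 3 ≠ 0)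
  rw [wallisSum, wallisSum, sum_range_succ, hodd, hnum, hden]
  field_simp

theorem wallisSum_eq_chooseOddSum (m : ℕ) (x : K) : wallisSum m x = chooseOddSum m x := by
  induction m with
  | zero => simp [wallisSum, chooseOddSum]
  | succ m ih =>
    have h : (2 * m + 3 : K) ≠ 0 := by exact_mod_cast (by omega : 2 * m + 3 ≠ 0)
    apply mul_left_cancel₀ h
    rw [wallisSum_succ, chooseOddSum_succ, ih]
end

lemma one_add_cot_sq {θ : ℝ} (h : sin θ ≠ 0) : 1 + cot θ ^ 2 = (sin θ ^ 2)⁻¹ := by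
  rw [cot_eq_cos_div_sin]
  field_simp
  linear_combination sin_sq_add_cos_sq θ

lemma cos_div_sin_pow_odd {θ : ℝ} (h : sin θ ≠ 0) (j : ℕ) :
    cos θ / sin θ ^ (2 * j + 1) = cot θ * (1 + cot θ ^ 2) ^ j := by
  rw [one_add_cot_sq h, cot_eq_cos_div_sin, inv_pow, ← pow_mul, pow_succ]
  field_simp

lemma doubleFactorial_sum_eq_cot_mul_wallisSum {θ : ℝ} (hsin : sin θ ≠ 0) (m : ℕ) :
    ((2 * (m + 1) - 2)‼ : ℝ) / (2 * (m + 1) - 1)‼ * cos θ *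
        ∑ k ∈ Icc 1 (m + 1), ((2 * k - 3)‼ : ℝ) / (2 * k - 2)‼ / sin θ ^ (2 * k - 1) =
      cot θ * wallisSum m (cot θ ^ 2) := by
  have hterm (j : ℕ) :
      cos θ * (((2 * (j + 1) - 3)‼ : ℝ) / (2 * (j + 1) - 2)‼ / sin θ ^ (2 * (j + 1) - 1)) =
        cot θ * (((2 * j - 1)‼ : ℝ) / (2 * j)‼ * (1 + cot θ ^ 2) ^ j) := by
    rw [show 2 * (j + 1) - 3 = 2 * j - 1 by omega, show 2 * (j + 1) - 2 = 2 * j by omega,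
      show 2 * (j + 1) - 1 = 2 * j + 1 by omega]
    linear_combination ((2 * j - 1)‼ / (2 * j)‼ : ℝ) * cos_div_sin_pow_odd hsin j
  rw [sum_Icc_one_eq_sum_range, mul_assoc, mul_sum, sum_congr rfl fun j _ => hterm j, ← mul_sum,
    wallisSum, show 2 * (m + 1) - 2 = 2 * m by omega, show 2 * (m + 1) - 1 = 2 * m + 1 by omega]
  ring

lemma factorial_sum_eq_cot_mul_chooseOddSum (θ : ℝ) (m : ℕ) :
    ((m + 1 - 1)! : ℝ) * ∑ k ∈ Icc 1 (m + 1),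
        cot θ ^ (2 * k - 1) / ((2 * k - 1 : ℝ) * (k - 1)! * (m + 1 - k)!) =
      cot θ * chooseOddSum m (cot θ ^ 2) := by
  have hterm (j : ℕ) (hj : j ∈ range (m + 1)) :
      (m ! : ℝ) * (cot θ ^ (2 * (j + 1) - 1) /
        ((2 * ((j + 1 : ℕ) : ℝ) - 1) * (j + 1 - 1)! * (m + 1 - (j + 1))!)) =
        cot θ * ((m.choose j : ℝ) * (cot θ ^ 2) ^ j / (2 * j + 1)) := by
    have hodd : 2 * ((j + 1 : ℕ) : ℝ) - 1 = 2 * j + 1 := by push_cast; ring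
    rw [cast_choose ℝ (by simpa [Nat.lt_succ_iff] using hj),
      show 2 * (j + 1) - 1 = 2 * j + 1 by omega, Nat.add_sub_cancel, Nat.add_sub_add_right,
      pow_succ, ← pow_mul, hodd]
    field_simp
  rw [sum_Icc_one_eq_sum_range, Nat.add_sub_cancel, mul_sum, sum_congr rfl hterm, ← mul_sum,
    chooseOddSum]

theorem two_sums_agree (n : ℕ) (hn : 1 ≤ n) (θ : ℝ) (hθ : θ ∈ Set.Ioo 0 π) :
    (((2 * n - 2)‼ : ℝ) / ((2 * n - 1)‼ : ℝ)) * Real.cos θ *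
        ∑ k ∈ Finset.Icc 1 n,
          (((2 * k - 3)‼ : ℝ) / ((2 * k - 2)‼ : ℝ)) / Real.sin θ ^ (2 * k - 1) =
      ((n - 1)! : ℝ) * ∑ k ∈ Finset.Icc 1 n,
        Real.cot θ ^ (2 * k - 1) / ((2 * k - 1 : ℝ) * ((k - 1)! : ℝ) * ((n - k)! : ℝ)) := by
  obtain ⟨m, rfl⟩ : ∃ m, n = m + 1 := ⟨n - 1, by omega⟩
  have hsin : sin θ ≠ 0 := (sin_pos_of_pos_of_lt_pi hθ.1 hθ.2).ne'
  rw [doubleFactorial_sum_eq_cot_mul_wallisSum hsin, factorial_sum_eq_cot_mul_chooseOddSum,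
    wallisSum_eq_chooseOddSum]
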